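/- arXiv:0910.0935 — 5 statements merged into one kernel-verified Lean document; each statement's English description precedes it below -/
import Mathlib

section
/- The explicit inverse of the Ka-transformation: define for w ∈ ℝ^N with w ≠ 0 the map Y(w) = ρ(w)·[ (⟨w,b⟩ − (g/(2h))·‖w − ⟨w,b⟩·b‖)·b + (1/h)·(w − ⟨w,b⟩·b) ], where ρ(w) = ‖w‖^{(1−h)/h}·exp( (g/2)·(1/h)·arccos(⟨w,b⟩/‖w‖) ). Then Y(ζ(y)) = y for every y ∈ ℝ^N with y ≠ 0. -/
/-! Write `y = v + t b` with `v ⊥ b`. Then `ζ(y) = c (h v + A b)` with `c = K^h / √B`, and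
since `‖h v + A b‖² = A² + h² q² = B` we get `‖ζ(y)‖ = K^h`, axial component `c A` and
`arccos (⟨ζ,b⟩/‖ζ‖) = arccos (A/√B) = h χ`. Substituting into `Y`, the transverse part becomes
`c v` and the axial part `c (A - (g/2) q) = c t`, so `Y(ζ(y)) = K^(1-h) e^(gχ/2) c · y`; the
scalar is `K e^(gχ/2) / √B = 1` because `K = √B e^(-gχ/2)`. -/

noncomputable section

open Real
open scoped RealInnerProductSpace

/-- The parameter `h = sqrt(1 - g^2/4)`. -/
def hpar (g : ℝ) : ℝ := Real.sqrt (1 - g ^ 2 / 4)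

variable {N : ℕ}

/-- `v(y) = y - ⟨b,y⟩ b`, the part of `y` orthogonal to the unit axis vector `b`. -/
def vv (b y : EuclideanSpace ℝ (Fin N)) : EuclideanSpace ℝ (Fin N) := y - (inner ℝ b y : ℝ) • b

/-- `q(y) = ‖v(y)‖`. -/
def qq (b y : EuclideanSpace ℝ (Fin N)) : ℝ := ‖vv b y‖

/-- `A(y) = ⟨b,y⟩ + (g/2) q(y)`. -/
def AA (g : ℝ) (b y : EuclideanSpace ℝ (Fin N)) : ℝ := (inner ℝ b y : ℝ) + g / 2 * qq b y

/-- `B(y) = ⟨b,y⟩² + g ⟨b,y⟩ q(y) + q(y)²`. -/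
def BB (g : ℝ) (b y : EuclideanSpace ℝ (Fin N)) : ℝ :=
  (inner ℝ b y : ℝ) ^ 2 + g * (inner ℝ b y : ℝ) * qq b y + qq b y ^ 2

/-- The azimuthal angle `χ(y) = (1/h) arccos (A(y)/√B(y))`. -/
def chi (g : ℝ) (b y : EuclideanSpace ℝ (Fin N)) : ℝ :=
  1 / hpar g * Real.arccos (AA g b y / Real.sqrt (BB g b y))

/-- `J(y) = exp(-(g/2) χ(y))`. -/
def JJ (g : ℝ) (b y : EuclideanSpace ℝ (Fin N)) : ℝ := Real.exp (-(g / 2) * chi g b y)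

/-- The Finsleroid metric function `K(y) = √B(y) · J(y)`. -/
def KK (g : ℝ) (b y : EuclideanSpace ℝ (Fin N)) : ℝ := Real.sqrt (BB g b y) * JJ g b y

/-- The Ka-transformation `ζ(y) = (K(y)^h/√B(y)) (h v(y) + A(y) b)`. -/
def zeta (g : ℝ) (b y : EuclideanSpace ℝ (Fin N)) : EuclideanSpace ℝ (Fin N) :=
  (KK g b y ^ hpar g / Real.sqrt (BB g b y)) • (hpar g • vv b y + AA g b y • b)

/-- The explicit inverse map `Y` of the Ka-transformation. -/
def Yinv (g : ℝ) (b w : EuclideanSpace ℝ (Fin N)) : EuclideanSpace ℝ (Fin N) :=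
  (‖w‖ ^ ((1 - hpar g) / hpar g) *
      Real.exp (g / 2 * (1 / hpar g) * Real.arccos ((inner ℝ w b : ℝ) / ‖w‖))) •
    (((inner ℝ w b : ℝ) - g / (2 * hpar g) * ‖w - (inner ℝ w b : ℝ) • b‖) • b
      + (1 / hpar g) • (w - (inner ℝ w b : ℝ) • b))

theorem hpar_sq {g : ℝ} (hg : g ^ 2 ≤ 4) : hpar g ^ 2 = 1 - g ^ 2 / 4 :=
  Real.sq_sqrt (by linarith)

theorem hpar_pos {g : ℝ} (hg : g ^ 2 < 4) : 0 < hpar g :=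
  Real.sqrt_pos.mpr (by linarith)

theorem vv_add_inner_smul (b y : EuclideanSpace ℝ (Fin N)) : vv b y + ⟪b, y⟫ • b = y :=
  sub_add_cancel _ _

theorem KK_mul_exp_chi (g : ℝ) (b y : EuclideanSpace ℝ (Fin N)) :
    KK g b y * Real.exp (g / 2 * chi g b y) = Real.sqrt (BB g b y) := by
  rw [KK, JJ, mul_assoc, ← Real.exp_add, neg_mul, neg_add_cancel, Real.exp_zero, mul_one]

theorem KK_pos {g : ℝ} {b y : EuclideanSpace ℝ (Fin N)} (hB : 0 < BB g b y) : 0 < KK g b y :=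
  mul_pos (Real.sqrt_pos.mpr hB) (Real.exp_pos _)

theorem BB_eq {g : ℝ} (hg : g ^ 2 ≤ 4) (b y : EuclideanSpace ℝ (Fin N)) :
    BB g b y = AA g b y ^ 2 + hpar g ^ 2 * qq b y ^ 2 := by
  rw [BB, AA, hpar_sq hg]
  ring

theorem BB_pos {g : ℝ} (hg : g ^ 2 < 4) (b : EuclideanSpace ℝ (Fin N))
    {y : EuclideanSpace ℝ (Fin N)} (hy : y ≠ 0) : 0 < BB g b y := by
  rw [BB_eq hg.le]
  by_contra! hB
  have hh := hpar_pos hg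
  have hhq : hpar g ^ 2 * qq b y ^ 2 = 0 :=
    le_antisymm (by nlinarith [sq_nonneg (AA g b y)]) (by positivity)
  have hq : qq b y = 0 := pow_eq_zero_iff two_ne_zero |>.mp <|
    (mul_eq_zero.mp hhq).resolve_left (pow_pos hh 2).ne'
  have hA : AA g b y = 0 := pow_eq_zero_iff two_ne_zero |>.mp <|
    le_antisymm (by nlinarith [sq_nonneg (qq b y)]) (sq_nonneg _)
  have hv : vv b y = 0 := norm_eq_zero.mp hq
  rw [AA, hq, mul_zero, add_zero] at hA
  exact hy (by rw [← vv_add_inner_smul b y, hv, hA, zero_smul, add_zero])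

section UnitAxis

variable {g : ℝ} {b : EuclideanSpace ℝ (Fin N)}

theorem inner_vv_left (hb : ‖b‖ = 1) (y : EuclideanSpace ℝ (Fin N)) : ⟪vv b y, b⟫ = 0 := by
  rw [vv, inner_sub_left, real_inner_smul_left, real_inner_self_eq_norm_sq, hb,
    real_inner_comm]
  ring

theorem norm_smul_vv_add_smul_sq (hb : ‖b‖ = 1) (y : EuclideanSpace ℝ (Fin N))
    (s a : ℝ) :
    ‖s • vv b y + a • b‖ ^ 2 = s ^ 2 * qq b y ^ 2 + a ^ 2 := by
  rw [norm_add_sq_real, real_inner_smul_left, real_inner_smul_right, inner_vv_left hb,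
    norm_smul, norm_smul, hb, Real.norm_eq_abs, Real.norm_eq_abs, qq]
  simp only [mul_pow, sq_abs]
  ring

theorem norm_hpar_smul_vv_add_AA_smul (hb : ‖b‖ = 1) (hg : g ^ 2 ≤ 4)
    (y : EuclideanSpace ℝ (Fin N)) :
    ‖hpar g • vv b y + AA g b y • b‖ = Real.sqrt (BB g b y) := by
  rw [← Real.sqrt_sq (norm_nonneg _), norm_smul_vv_add_smul_sq hb, BB_eq hg]
  ring_nf

theorem inner_zeta_left (hb : ‖b‖ = 1) (y : EuclideanSpace ℝ (Fin N)) :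
    ⟪zeta g b y, b⟫ = KK g b y ^ hpar g / Real.sqrt (BB g b y) * AA g b y := by
  rw [zeta, real_inner_smul_left, inner_add_left, real_inner_smul_left, real_inner_smul_left,
    inner_vv_left hb, real_inner_self_eq_norm_sq, hb]
  ring

theorem zeta_sub_inner_smul (hb : ‖b‖ = 1) (y : EuclideanSpace ℝ (Fin N)) :
    zeta g b y - ⟪zeta g b y, b⟫ • b
      = (KK g b y ^ hpar g / Real.sqrt (BB g b y) * hpar g) • vv b y := by
  rw [inner_zeta_left hb, zeta]
  module

theorem norm_zeta (hb : ‖b‖ = 1) (hg : g ^ 2 ≤ 4) {y : EuclideanSpace ℝ (Fin N)}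
    (hB : 0 < BB g b y) : ‖zeta g b y‖ = KK g b y ^ hpar g := by
  rw [zeta, norm_smul, norm_hpar_smul_vv_add_AA_smul hb hg, Real.norm_eq_abs,
    abs_of_nonneg (div_nonneg (Real.rpow_nonneg (KK_pos hB).le _) (Real.sqrt_nonneg _)),
    div_mul_cancel₀ _ (Real.sqrt_pos.mpr hB).ne']

theorem arccos_inner_zeta_div_norm (hb : ‖b‖ = 1) (hg : g ^ 2 < 4)
    {y : EuclideanSpace ℝ (Fin N)} (hB : 0 < BB g b y) :
    Real.arccos (⟪zeta g b y, b⟫ / ‖zeta g b y‖) = hpar g * chi g b y := by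
  have hK := (Real.rpow_pos_of_pos (KK_pos hB) (hpar g)).ne'
  rw [inner_zeta_left hb, norm_zeta hb hg.le hB, chi, ← mul_assoc, mul_one_div_cancel
    (hpar_pos hg).ne', one_mul]
  congr 1
  field_simp

theorem Yinv_zeta_eq_smul (hb : ‖b‖ = 1) (hg : g ^ 2 < 4) {y : EuclideanSpace ℝ (Fin N)}
    (hB : 0 < BB g b y) :
    Yinv g b (zeta g b y) = (KK g b y ^ (1 - hpar g) * Real.exp (g / 2 * chi g b y)
      * (KK g b y ^ hpar g / Real.sqrt (BB g b y))) • y := by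
  have hh := hpar_pos hg
  have hK := KK_pos hB
  set c := KK g b y ^ hpar g / Real.sqrt (BB g b y)
  have hc_pos : 0 < c := div_pos (Real.rpow_pos_of_pos hK _) (Real.sqrt_pos.mpr hB)
  rw [Yinv, arccos_inner_zeta_div_norm hb hg hB, zeta_sub_inner_smul hb, inner_zeta_left hb,
    norm_zeta hb hg.le hB, norm_smul, Real.norm_eq_abs, abs_of_pos (mul_pos hc_pos hh),
    ← Real.rpow_mul hK.le]
  have hexp : hpar g * ((1 - hpar g) / hpar g) = 1 - hpar g := by field_simp
  have hangle : g / 2 * (1 / hpar g) * (hpar g * chi g b y) = g / 2 * chi g b y := by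
    field_simp
  have haxial : c * AA g b y - g / (2 * hpar g) * (c * hpar g * qq b y) = c * ⟪b, y⟫ := by
    rw [AA]; field_simp; ring
  have hperp : (1 / hpar g) • ((c * hpar g) • vv b y) = c • vv b y := by
    rw [smul_smul]; congr 1; field_simp
  rw [hexp, hangle, ← qq, haxial, hperp]
  conv_rhs => arg 2; rw [← vv_add_inner_smul b y]
  module

end UnitAxis

theorem stmt5_general (N : ℕ) (g : ℝ) (hg1 : -2 < g) (hg2 : g < 2)
    (b : EuclideanSpace ℝ (Fin N)) (hb : ‖b‖ = 1)
    (y : EuclideanSpace ℝ (Fin N)) (hy : y ≠ 0) :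
    Yinv g b (zeta g b y) = y := by
  have hg : g ^ 2 < 4 := by nlinarith
  have hB := BB_pos hg b hy
  have hK := KK_pos hB
  have hS := Real.sqrt_pos.mpr hB
  have hscalar : KK g b y ^ (1 - hpar g) * Real.exp (g / 2 * chi g b y)
      * (KK g b y ^ hpar g / Real.sqrt (BB g b y)) = 1 := by
    rw [mul_div_assoc', div_eq_one_iff_eq hS.ne', mul_right_comm, ← Real.rpow_add hK,
      sub_add_cancel, Real.rpow_one, KK_mul_exp_chi]
  rw [Yinv_zeta_eq_smul hb hg hB, hscalar, one_smul]

theorem stmt5 (N : ℕ) (hN : 2 ≤ N) (g : ℝ) (hg1 : -2 < g) (hg2 : g < 2)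
    (b : EuclideanSpace ℝ (Fin N)) (hb : ‖b‖ = 1)
    (y : EuclideanSpace ℝ (Fin N)) (hy : y ≠ 0) :
    Yinv g b (zeta g b y) = y :=
  stmt5_general N g hg1 hg2 b hb y hy
end
end

section
/- The Finsleroid angle of a vector with the axis equals the azimuthal coordinate χ: for every y ∈ ℝ^N with y ≠ 0, ⟨ζ(y), b⟩ = K(y)^h·A(y)/√B(y), and hence (1/h)·arccos( ⟨ζ(y), b⟩ / ‖ζ(y)‖ ) = χ(y). -/
noncomputable section

open Real
open scoped RealInnerProductSpace

variable {N : ℕ}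

/-! Since `v(y) ⊥ b` and `‖b‖ = 1`, Pythagoras gives `‖h v(y) + A(y) b‖² = h² q(y)² + A(y)² = B(y)`,
so `‖ζ(y)‖ = K(y)^h` while `⟨ζ(y), b⟩ = K(y)^h A(y)/√B(y)`. Their quotient is `A(y)/√B(y)`, the cosine
of `h χ(y)`. -/

namespace Finsleroid

variable {N : ℕ} {g : ℝ} {b : EuclideanSpace ℝ (Fin N)}

theorem hpar_sq (hg : g ^ 2 ≤ 4) : hpar g ^ 2 = 1 - g ^ 2 / 4 :=
  sq_sqrt (by linarith)

theorem inner_vv_left (hb : ‖b‖ = 1) (y : EuclideanSpace ℝ (Fin N)) : ⟪vv b y, b⟫ = 0 := by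
  simp [vv, inner_sub_left, inner_smul_left, real_inner_comm b y, hb]

theorem BB_eq_AA_sq_add (hg : g ^ 2 ≤ 4) (y : EuclideanSpace ℝ (Fin N)) :
    BB g b y = AA g b y ^ 2 + hpar g ^ 2 * qq b y ^ 2 := by
  rw [hpar_sq hg, AA, BB]
  ring

theorem norm_hpar_smul_vv_add (hb : ‖b‖ = 1) (hg : g ^ 2 ≤ 4) (y : EuclideanSpace ℝ (Fin N)) :
    ‖hpar g • vv b y + AA g b y • b‖ = √(BB g b y) := by
  have horth : ⟪hpar g • vv b y, AA g b y • b⟫ = 0 := by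
    rw [inner_smul_left, inner_smul_right, inner_vv_left hb, mul_zero, mul_zero]
  rw [norm_add_eq_sqrt_iff_real_inner_eq_zero.2 horth, BB_eq_AA_sq_add hg, norm_smul, norm_smul, hb,
    Real.norm_eq_abs, Real.norm_eq_abs, ← qq]
  congr 1
  linear_combination qq b y ^ 2 * abs_mul_abs_self (hpar g) + abs_mul_abs_self (AA g b y)

theorem inner_zeta_axis (hb : ‖b‖ = 1) (y : EuclideanSpace ℝ (Fin N)) :
    ⟪zeta g b y, b⟫ = KK g b y ^ hpar g * AA g b y / √(BB g b y) := by
  have hbb : ⟪b, b⟫ = 1 := by rw [real_inner_self_eq_norm_sq, hb, one_pow]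
  rw [zeta, real_inner_smul_left, inner_add_left, real_inner_smul_left, real_inner_smul_left,
    inner_vv_left hb, hbb]
  ring

theorem norm_zeta (hb : ‖b‖ = 1) (hg : g ^ 2 ≤ 4) {y : EuclideanSpace ℝ (Fin N)}
    (hB : 0 < √(BB g b y)) : ‖zeta g b y‖ = KK g b y ^ hpar g := by
  have hKh : 0 < KK g b y ^ hpar g := rpow_pos_of_pos (mul_pos hB (exp_pos _)) _
  rw [zeta, norm_smul, norm_hpar_smul_vv_add hb hg, Real.norm_eq_abs,
    abs_of_pos (div_pos hKh hB), div_mul_cancel₀ _ hB.ne']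

/-- Where `B(y) = 0` (only at `y = 0`), both sides are `0` through the junk value `x / 0 = 0`. -/
theorem inner_zeta_axis_div_norm (hb : ‖b‖ = 1) (hg : g ^ 2 ≤ 4) (y : EuclideanSpace ℝ (Fin N)) :
    ⟪zeta g b y, b⟫ / ‖zeta g b y‖ = AA g b y / √(BB g b y) := by
  rw [inner_zeta_axis hb]
  rcases (sqrt_nonneg (BB g b y)).eq_or_lt with hB | hB
  · rw [← hB, div_zero, div_zero, zero_div]
  · have hKh : KK g b y ^ hpar g ≠ 0 := (rpow_pos_of_pos (mul_pos hB (exp_pos _)) _).ne'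
    rw [norm_zeta hb hg hB, mul_div_assoc, mul_div_cancel_left₀ _ hKh]

end Finsleroid

theorem stmt8_general (N : ℕ) (g : ℝ) (hg1 : -2 < g) (hg2 : g < 2)
    (b : EuclideanSpace ℝ (Fin N)) (hb : ‖b‖ = 1)
    (y : EuclideanSpace ℝ (Fin N)) :
    (inner ℝ (zeta g b y) b : ℝ) = KK g b y ^ hpar g * AA g b y / Real.sqrt (BB g b y) ∧
    1 / hpar g * Real.arccos ((inner ℝ (zeta g b y) b : ℝ) / ‖zeta g b y‖) = chi g b y := by
  have hg : g ^ 2 ≤ 4 := by nlinarith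
  exact ⟨Finsleroid.inner_zeta_axis hb y, by rw [Finsleroid.inner_zeta_axis_div_norm hb hg y, chi]⟩

theorem stmt8 (N : ℕ) (hN : 2 ≤ N) (g : ℝ) (hg1 : -2 < g) (hg2 : g < 2)
    (b : EuclideanSpace ℝ (Fin N)) (hb : ‖b‖ = 1)
    (y : EuclideanSpace ℝ (Fin N)) (hy : y ≠ 0) :
    (inner ℝ (zeta g b y) b : ℝ) = KK g b y ^ hpar g * AA g b y / Real.sqrt (BB g b y) ∧
    1 / hpar g * Real.arccos ((inner ℝ (zeta g b y) b : ℝ) / ‖zeta g b y‖) = chi g b y :=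
  stmt8_general N g hg1 hg2 b hb y
end
end

section
/- Explicit inverse of the FF^PD_g metric tensor: for every y ∈ ℝ^N with q(y) > 0, the matrix with entries g^{jk}(y) = (B(y)/K(y)²)·[ δ^{jk} + (g/q(y))·( b(y)·b_j b_k − b_j y_k − b_k y_j ) + (g/(B(y)q(y)))·(b(y)+g q(y))·y_j y_k ] is the two-sided matrix inverse of the matrix with entries g_{ij}(y) = (K(y)²/B(y))·[ δ_{ij} + (g/B(y))·( q(y)(b(y)+g q(y))·b_i b_j + q(y)(b_i v_j(y)+b_j v_i(y)) − (b(y)/q(y))·v_i(y)v_j(y) ) ], i.e. g_{ij}(y)·g^{jk}(y) = δ_i^k. -/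
noncomputable section

open Real
open scoped RealInnerProductSpace

variable {N : ℕ}

/-! Both tensors are a conformal factor (`K²/B`, resp. `B/K²`) times the identity plus a
perturbation supported on the plane of the orthonormal pair `b`, `v/q`. Writing `F` for the
`2 × N` matrix with rows `b`, `v/q`, the perturbations are `Fᵀ M F` and `Fᵀ M' F` with
`M = (gq/B) P`, `M' = (gq/B) P'`, `P = [[β+gq, q], [q, -β]]`, `P' = [[-β, -q], [-q, β+gq]]`
(`β = ⟨b, y⟩`, using `y = β b + v`). Since `F Fᵀ = 1`, inverting reduces to the `2 × 2` identity
`(1 + M)(1 + M') = 1`, which holds because `P + P' = gq` and `P P' = -B`. -/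

open Matrix

theorem one_add_transpose_mul_mul_one_add {m n R : Type*} [Fintype m] [Fintype n] [DecidableEq m]
    [DecidableEq n] [CommRing R] {F : Matrix m n R} (hF : F * Fᵀ = 1) {M M' : Matrix m m R}
    (h : (1 + M) * (1 + M') = 1) :
    (1 + Fᵀ * M * F) * (1 + Fᵀ * M' * F) = 1 := by
  have hsum : M + M' + M * M' = 0 := by
    rw [← sub_eq_zero.mpr h]; noncomm_ring
  calc (1 + Fᵀ * M * F) * (1 + Fᵀ * M' * F)
      = 1 + Fᵀ * (M + M' + M * (F * Fᵀ) * M') * F := by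
        simp only [Matrix.add_mul, Matrix.mul_add, Matrix.one_mul, Matrix.mul_one,
          Matrix.mul_assoc, add_assoc]
    _ = 1 := by rw [hF, Matrix.mul_one, hsum, Matrix.mul_zero, Matrix.zero_mul, add_zero]

theorem Orthonormal.rows_mul_transpose_eq_one {m n : Type*} [Fintype m] [Fintype n]
    [DecidableEq m] {v : m → EuclideanSpace ℝ n} (hv : Orthonormal ℝ v) :
    (Matrix.of fun k i => v k i) * (Matrix.of fun k i => v k i)ᵀ = 1 := by
  ext k l
  rw [Matrix.one_apply, ← orthonormal_iff_ite.mp hv k l, PiLp.inner_apply, Matrix.mul_apply]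
  simp [mul_comm]

theorem sq_add_mul_mul_add_sq_pos {g x q : ℝ} (hg1 : -2 < g) (hg2 : g < 2) (hq : q ≠ 0) :
    0 < x ^ 2 + g * x * q + q ^ 2 := by
  have hdisc : 0 < (2 - g) * (2 + g) * q ^ 2 :=
    mul_pos (mul_pos (by linarith) (by linarith)) (sq_pos_of_ne_zero hq)
  nlinarith [sq_nonneg (2 * x + g * q)]

/-- In the orthonormal frame `(b, v/q)` of the plane of `b` and `y`, with `β = ⟨b, y⟩` and
`B = B(y)`, the metric tensor divided by `K²/B` is `1 + metricCore g β q B` on that plane and the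
identity on its orthogonal complement; likewise the inverse tensor divided by `B/K²`, with
`inverseMetricCore`. -/
def metricCore (g β q B : ℝ) : Matrix (Fin 2) (Fin 2) ℝ :=
  (g * q / B) • !![β + g * q, q; q, -β]

def inverseMetricCore (g β q B : ℝ) : Matrix (Fin 2) (Fin 2) ℝ :=
  (g * q / B) • !![-β, -q; -q, β + g * q]

theorem one_add_metricCore_mul_one_add_inverseMetricCore {g β q B : ℝ}
    (hBdef : B = β ^ 2 + g * β * q + q ^ 2) (hB : B ≠ 0) :
    (1 + metricCore g β q B) * (1 + inverseMetricCore g β q B) = 1 := by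
  unfold metricCore inverseMetricCore
  ext i j
  fin_cases i <;> fin_cases j <;>
    simp [Matrix.mul_apply, Fin.sum_univ_two] <;>
    field_simp <;> rw [hBdef] <;> ring

section Finsleroid

variable {b y : EuclideanSpace ℝ (Fin N)}

def axialFrame (b y : EuclideanSpace ℝ (Fin N)) : Matrix (Fin 2) (Fin N) ℝ :=
  Matrix.of fun k i => ![b, (qq b y)⁻¹ • vv b y] k i

theorem vv_apply (i : Fin N) : vv b y i = y i - inner ℝ b y * b i := by
  simp [vv]

theorem inner_vv_eq_zero (hb : ‖b‖ = 1) : inner ℝ b (vv b y) = 0 := by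
  simp [vv, inner_sub_right, real_inner_smul_right, hb]

theorem orthonormal_axialFrame (hb : ‖b‖ = 1) (hq : qq b y ≠ 0) :
    Orthonormal ℝ ![b, (qq b y)⁻¹ • vv b y] := by
  rw [qq] at hq ⊢
  rw [orthonormal_iff_ite]
  intro i j
  fin_cases i <;> fin_cases j <;> simp [hb, inner_vv_eq_zero hb, real_inner_smul_left,
    real_inner_smul_right, real_inner_comm b (vv b y), norm_smul, inv_mul_cancel₀ hq]

theorem metric_matrix_eq (g : ℝ) (hq : qq b y ≠ 0) :
    (Matrix.of fun i j : Fin N =>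
        KK g b y ^ 2 / BB g b y *
          ((if i = j then (1 : ℝ) else 0) + g / BB g b y *
            (qq b y * ((inner ℝ b y : ℝ) + g * qq b y) * b i * b j
              + qq b y * (b i * vv b y j + b j * vv b y i)
              - (inner ℝ b y : ℝ) / qq b y * vv b y i * vv b y j))) =
      (KK g b y ^ 2 / BB g b y) •
        (1 + (axialFrame b y)ᵀ * metricCore g (inner ℝ b y) (qq b y) (BB g b y) *
          axialFrame b y) := by
  ext i j
  rw [Matrix.smul_apply, Matrix.of_apply, smul_eq_mul]
  congr 1
  simp [Matrix.mul_apply, Fin.sum_univ_two, axialFrame, metricCore, Matrix.one_apply]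
  field_simp
  ring

theorem inverseMetric_matrix_eq (g : ℝ) (hq : qq b y ≠ 0) (hB : BB g b y ≠ 0) :
    (Matrix.of fun j k : Fin N =>
        BB g b y / KK g b y ^ 2 *
          ((if j = k then (1 : ℝ) else 0)
            + g / qq b y * ((inner ℝ b y : ℝ) * b j * b k - b j * y k - b k * y j)
            + g / (BB g b y * qq b y) * ((inner ℝ b y : ℝ) + g * qq b y) * y j * y k)) =
      (BB g b y / KK g b y ^ 2) •
        (1 + (axialFrame b y)ᵀ * inverseMetricCore g (inner ℝ b y) (qq b y) (BB g b y) *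
          axialFrame b y) := by
  ext j k
  rw [Matrix.smul_apply, Matrix.of_apply, smul_eq_mul]
  congr 1
  simp [Matrix.mul_apply, Fin.sum_univ_two, axialFrame, inverseMetricCore, Matrix.one_apply,
    vv_apply]
  field_simp
  rw [BB]
  ring

end Finsleroid

theorem stmt13_general (N : ℕ) (g : ℝ) (hg1 : -2 < g) (hg2 : g < 2)
    (b : EuclideanSpace ℝ (Fin N)) (hb : ‖b‖ = 1)
    (y : EuclideanSpace ℝ (Fin N)) (hq : 0 < qq b y) :
    (Matrix.of fun i j : Fin N =>
        KK g b y ^ 2 / BB g b y *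
          ((if i = j then (1 : ℝ) else 0) + g / BB g b y *
            (qq b y * ((inner ℝ b y : ℝ) + g * qq b y) * b i * b j
              + qq b y * (b i * vv b y j + b j * vv b y i)
              - (inner ℝ b y : ℝ) / qq b y * vv b y i * vv b y j))) *
      (Matrix.of fun j k : Fin N =>
        BB g b y / KK g b y ^ 2 *
          ((if j = k then (1 : ℝ) else 0)
            + g / qq b y * ((inner ℝ b y : ℝ) * b j * b k - b j * y k - b k * y j)
            + g / (BB g b y * qq b y) * ((inner ℝ b y : ℝ) + g * qq b y) * y j * y k)) = 1 ∧
    (Matrix.of fun j k : Fin N =>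
        BB g b y / KK g b y ^ 2 *
          ((if j = k then (1 : ℝ) else 0)
            + g / qq b y * ((inner ℝ b y : ℝ) * b j * b k - b j * y k - b k * y j)
            + g / (BB g b y * qq b y) * ((inner ℝ b y : ℝ) + g * qq b y) * y j * y k)) *
      (Matrix.of fun i j : Fin N =>
        KK g b y ^ 2 / BB g b y *
          ((if i = j then (1 : ℝ) else 0) + g / BB g b y *
            (qq b y * ((inner ℝ b y : ℝ) + g * qq b y) * b i * b j
              + qq b y * (b i * vv b y j + b j * vv b y i)
              - (inner ℝ b y : ℝ) / qq b y * vv b y i * vv b y j))) = 1 := by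
  have hB : 0 < BB g b y := sq_add_mul_mul_add_sq_pos hg1 hg2 hq.ne'
  have hK : KK g b y ≠ 0 := (mul_pos (Real.sqrt_pos.mpr hB) (Real.exp_pos _)).ne'
  rw [metric_matrix_eq g hq.ne', inverseMetric_matrix_eq g hq.ne' hB.ne']
  refine ⟨?h, mul_eq_one_comm.mp ?h⟩
  rw [smul_mul_smul_comm, div_mul_div_cancel₀ hB.ne', div_self (pow_ne_zero 2 hK), one_smul]
  exact one_add_transpose_mul_mul_one_add
    (orthonormal_axialFrame hb hq.ne').rows_mul_transpose_eq_one
    (one_add_metricCore_mul_one_add_inverseMetricCore rfl hB.ne')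

theorem stmt13 (N : ℕ) (hN : 2 ≤ N) (g : ℝ) (hg1 : -2 < g) (hg2 : g < 2)
    (b : EuclideanSpace ℝ (Fin N)) (hb : ‖b‖ = 1)
    (y : EuclideanSpace ℝ (Fin N)) (hq : 0 < qq b y) :
    (Matrix.of fun i j : Fin N =>
        KK g b y ^ 2 / BB g b y *
          ((if i = j then (1 : ℝ) else 0) + g / BB g b y *
            (qq b y * ((inner ℝ b y : ℝ) + g * qq b y) * b i * b j
              + qq b y * (b i * vv b y j + b j * vv b y i)
              - (inner ℝ b y : ℝ) / qq b y * vv b y i * vv b y j))) *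
      (Matrix.of fun j k : Fin N =>
        BB g b y / KK g b y ^ 2 *
          ((if j = k then (1 : ℝ) else 0)
            + g / qq b y * ((inner ℝ b y : ℝ) * b j * b k - b j * y k - b k * y j)
            + g / (BB g b y * qq b y) * ((inner ℝ b y : ℝ) + g * qq b y) * y j * y k)) = 1 ∧
    (Matrix.of fun j k : Fin N =>
        BB g b y / KK g b y ^ 2 *
          ((if j = k then (1 : ℝ) else 0)
            + g / qq b y * ((inner ℝ b y : ℝ) * b j * b k - b j * y k - b k * y j)
            + g / (BB g b y * qq b y) * ((inner ℝ b y : ℝ) + g * qq b y) * y j * y k)) *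
      (Matrix.of fun i j : Fin N =>
        KK g b y ^ 2 / BB g b y *
          ((if i = j then (1 : ℝ) else 0) + g / BB g b y *
            (qq b y * ((inner ℝ b y : ℝ) + g * qq b y) * b i * b j
              + qq b y * (b i * vv b y j + b j * vv b y i)
              - (inner ℝ b y : ℝ) / qq b y * vv b y i * vv b y j))) = 1 :=
  stmt13_general N g hg1 hg2 b hb y hq
end
end

section
/- Explicit integration of the azimuthal geodesic equation on the FF^PD_g indicatrix (Theorem 2.8, χ-part): let 0 < h ≤ 1, let C̃, s̃ ∈ ℝ with 0 < h·|C̃| ≤ 1, and define χ(s) = (1/h)·arccos( √(1 − h²C̃²)·cos(h(s − s̃)) ). Then sin(hχ(s)) = √( 1 − (1 − h²C̃²)·cos²(h(s − s̃)) ), and at every s where χ is differentiable (all s when h|C̃| < 1 and C̃ ≠ 0), χ'(s)² = 1 − h²C̃²/sin²(hχ(s)). -/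
/-!
With `A = √(1 - h²C̃²)` and `θ = h(s - s̃)` we have `hχ = arccos (A cos θ)`, so
`sin (hχ) = √(1 - A² cos² θ)`. Since `h|C̃| > 0` gives `|A| < 1`, the argument of `arccos`
stays in `(-1, 1)`, where the chain rule gives `χ' = A sin θ / √(1 - A² cos² θ)`, and then
`χ'² = 1 - (1 - A²) / sin² (hχ)` is the Pythagorean identity `sin² θ + cos² θ = 1`.
-/

open Real

lemma sin_arccos_mul_cos (A θ : ℝ) :
    sin (arccos (A * cos θ)) = √(1 - A ^ 2 * cos θ ^ 2) := by
  rw [sin_arccos, mul_pow]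

lemma abs_mul_cos_lt_one {A : ℝ} (hA : |A| < 1) (θ : ℝ) : |A * cos θ| < 1 := by
  rw [abs_mul]
  calc |A| * |cos θ| ≤ |A| := mul_le_of_le_one_right (abs_nonneg A) (abs_cos_le_one θ)
    _ < 1 := hA

lemma hasDerivAt_one_div_mul_arccos_mul_cos {A h : ℝ} (hA : |A| < 1) (hh : h ≠ 0) (s₀ s : ℝ) :
    HasDerivAt (fun s => 1 / h * arccos (A * cos (h * (s - s₀))))
      (A * sin (h * (s - s₀)) / √(1 - A ^ 2 * cos (h * (s - s₀)) ^ 2)) s := by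
  have hx := abs_lt.mp (abs_mul_cos_lt_one hA (h * (s - s₀)))
  have hθ : HasDerivAt (fun s => h * (s - s₀)) h s := by
    simpa using ((hasDerivAt_id s).sub_const s₀).const_mul h
  refine (((hasDerivAt_arccos hx.1.ne' hx.2.ne).comp s (hθ.cos.const_mul A)).const_mul
    (1 / h)).congr_deriv ?_
  rw [mul_pow]
  field_simp

lemma sq_mul_sin_div_sqrt {A θ : ℝ} (hA : A ^ 2 * cos θ ^ 2 < 1) :
    (A * sin θ / √(1 - A ^ 2 * cos θ ^ 2)) ^ 2 =
      1 - (1 - A ^ 2) / √(1 - A ^ 2 * cos θ ^ 2) ^ 2 := by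
  have hpos : 0 < 1 - A ^ 2 * cos θ ^ 2 := by linarith
  rw [div_pow, mul_pow, sq_sqrt hpos.le]
  field_simp
  linear_combination A ^ 2 * sin_sq_add_cos_sq θ

theorem stmt17_general (h C s₀ : ℝ)
    (hC0 : 0 < h * |C|) (hC1 : h * |C| ≤ 1) :
    (∀ s : ℝ,
      Real.sin (h * (1 / h * Real.arccos
          (Real.sqrt (1 - h ^ 2 * C ^ 2) * Real.cos (h * (s - s₀))))) =
        Real.sqrt (1 - (1 - h ^ 2 * C ^ 2) * Real.cos (h * (s - s₀)) ^ 2)) ∧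
    (∀ s : ℝ,
      DifferentiableAt ℝ
          (fun s => 1 / h * Real.arccos
            (Real.sqrt (1 - h ^ 2 * C ^ 2) * Real.cos (h * (s - s₀)))) s →
        (deriv (fun s => 1 / h * Real.arccos
            (Real.sqrt (1 - h ^ 2 * C ^ 2) * Real.cos (h * (s - s₀)))) s) ^ 2 =
          1 - h ^ 2 * C ^ 2 /
            Real.sin (h * (1 / h * Real.arccos
              (Real.sqrt (1 - h ^ 2 * C ^ 2) * Real.cos (h * (s - s₀))))) ^ 2) := by
  have hh : h ≠ 0 := (pos_of_mul_pos_left hC0 (abs_nonneg C)).ne'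
  have hhC : 0 < h ^ 2 * C ^ 2 ∧ h ^ 2 * C ^ 2 ≤ 1 := by
    rw [← sq_abs C, ← mul_pow]
    exact ⟨pow_pos hC0 2, pow_le_one₀ hC0.le hC1⟩
  set A := √(1 - h ^ 2 * C ^ 2)
  have hA2 : A ^ 2 = 1 - h ^ 2 * C ^ 2 := sq_sqrt (by linarith)
  have hA : |A| < 1 := by rw [← sq_lt_one_iff_abs_lt_one]; linarith
  have hsin (s : ℝ) : sin (h * (1 / h * arccos (A * cos (h * (s - s₀))))) =
      √(1 - (1 - h ^ 2 * C ^ 2) * cos (h * (s - s₀)) ^ 2) := by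
    rw [one_div, mul_inv_cancel_left₀ hh, sin_arccos_mul_cos, hA2]
  refine ⟨hsin, fun s _ => ?_⟩
  have hAcos : A ^ 2 * cos (h * (s - s₀)) ^ 2 < 1 := by
    rw [← mul_pow, sq_lt_one_iff_abs_lt_one]; exact abs_mul_cos_lt_one hA _
  rw [(hasDerivAt_one_div_mul_arccos_mul_cos hA hh s₀ s).deriv, hsin, ← hA2,
    sq_mul_sin_div_sqrt hAcos, hA2, sub_sub_cancel]

theorem stmt17 (h C s₀ : ℝ) (hh0 : 0 < h) (hh1 : h ≤ 1)
    (hC0 : 0 < h * |C|) (hC1 : h * |C| ≤ 1) :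
    (∀ s : ℝ,
      Real.sin (h * (1 / h * Real.arccos
          (Real.sqrt (1 - h ^ 2 * C ^ 2) * Real.cos (h * (s - s₀))))) =
        Real.sqrt (1 - (1 - h ^ 2 * C ^ 2) * Real.cos (h * (s - s₀)) ^ 2)) ∧
    (∀ s : ℝ,
      DifferentiableAt ℝ
          (fun s => 1 / h * Real.arccos
            (Real.sqrt (1 - h ^ 2 * C ^ 2) * Real.cos (h * (s - s₀)))) s →
        (deriv (fun s => 1 / h * Real.arccos
            (Real.sqrt (1 - h ^ 2 * C ^ 2) * Real.cos (h * (s - s₀)))) s) ^ 2 =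
          1 - h ^ 2 * C ^ 2 /
            Real.sin (h * (1 / h * Real.arccos
              (Real.sqrt (1 - h ^ 2 * C ^ 2) * Real.cos (h * (s - s₀))))) ^ 2) :=
  stmt17_general h C s₀ hC0 hC1
end

section
/- Explicit integration of the polar geodesic equation on the FF^PD_g indicatrix (Theorem 2.8, φ-part): let 0 < h ≤ 1, C̃ ≠ 0 with h·|C̃| ≤ 1, and s̃ ∈ ℝ. Define on the interval s − s̃ ∈ (−π/(2h), π/(2h)) the function φ(s) = arctan( tan(h(s − s̃)) / (hC̃) ). Then φ is differentiable there and φ'(s) = h²C̃ / ( 1 − (1 − h²C̃²)·cos²(h(s − s̃)) ); equivalently, with χ(s) = (1/h)·arccos(√(1 − h²C̃²)·cos(h(s − s̃))), one has (1/h²)·sin²(hχ(s))·φ'(s) = C̃. -/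
/-!
With θ = h(s − s̃) and c = hC̃, the chain rule reduces the derivative of arctan(tan θ / c) to
c / (c² cos²θ + sin²θ) = c / (1 − (1 − c²) cos²θ), and the extra factor h from dθ/ds gives h²C̃.
Since sin²(arccos x) = 1 − x² for |x| ≤ 1, the factor sin²(hχ) is exactly that denominator,
so the angular-momentum integral collapses to C̃.
-/

open Real

lemma one_sub_one_sub_sq_mul_cos_sq_eq (c θ : ℝ) :
    1 - (1 - c ^ 2) * cos θ ^ 2 = c ^ 2 * cos θ ^ 2 + sin θ ^ 2 := by
  linear_combination -sin_sq_add_cos_sq θ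

lemma hasDerivAt_arctan_tan_div {c θ : ℝ} (hc : c ≠ 0) (hθ : cos θ ≠ 0) :
    HasDerivAt (fun θ => arctan (tan θ / c)) (c / (1 - (1 - c ^ 2) * cos θ ^ 2)) θ := by
  convert ((hasDerivAt_tan hθ).div_const c).arctan using 1
  rw [one_sub_one_sub_sq_mul_cos_sq_eq, tan_eq_sin_div_cos]
  field_simp

lemma sin_arccos_sqrt_mul_cos_sq {a : ℝ} (ha0 : 0 ≤ a) (ha1 : a ≤ 1) (θ : ℝ) :
    sin (arccos (√(1 - a) * cos θ)) ^ 2 = 1 - (1 - a) * cos θ ^ 2 := by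
  have hsq : (√(1 - a) * cos θ) ^ 2 = (1 - a) * cos θ ^ 2 := by
    rw [mul_pow, sq_sqrt (by linarith)]
  have hle : (1 - a) * cos θ ^ 2 ≤ 1 := by
    nlinarith [cos_sq_le_one θ, sq_nonneg (cos θ)]
  rw [sin_arccos, hsq, sq_sqrt (by linarith)]

lemma mul_mem_Ioo_neg_of_mem_Ioo_div {h a x : ℝ} (hh : 0 < h)
    (hx : x ∈ Set.Ioo (-(a / h)) (a / h)) : h * x ∈ Set.Ioo (-a) a := by
  obtain ⟨hlo, hhi⟩ := hx
  rw [← neg_div, div_lt_iff₀' hh] at hlo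
  rw [lt_div_iff₀' hh] at hhi
  exact ⟨hlo, hhi⟩

theorem stmt18_general (h C s₀ : ℝ) (hh0 : 0 < h)
    (hC : C ≠ 0) (hC1 : h * |C| ≤ 1) :
    ∀ s : ℝ, s - s₀ ∈ Set.Ioo (-(Real.pi / (2 * h))) (Real.pi / (2 * h)) →
      DifferentiableAt ℝ (fun s => Real.arctan (Real.tan (h * (s - s₀)) / (h * C))) s ∧
      deriv (fun s => Real.arctan (Real.tan (h * (s - s₀)) / (h * C))) s =
        h ^ 2 * C / (1 - (1 - h ^ 2 * C ^ 2) * Real.cos (h * (s - s₀)) ^ 2) ∧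
      1 / h ^ 2 *
          Real.sin (h * (1 / h * Real.arccos
            (Real.sqrt (1 - h ^ 2 * C ^ 2) * Real.cos (h * (s - s₀))))) ^ 2 *
          deriv (fun s => Real.arctan (Real.tan (h * (s - s₀)) / (h * C))) s = C := by
  intro s hs
  rw [← div_div] at hs
  set θ := h * (s - s₀)
  have hcos : 0 < cos θ := cos_pos_of_mem_Ioo (mul_mem_Ioo_neg_of_mem_Ioo_div hh0 hs)
  have hderiv : HasDerivAt (fun s => arctan (tan (h * (s - s₀)) / (h * C)))
      (h ^ 2 * C / (1 - (1 - h ^ 2 * C ^ 2) * cos θ ^ 2)) s := by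
    have hinner : HasDerivAt (fun s => h * (s - s₀)) h s := by
      simpa using ((hasDerivAt_id s).sub_const s₀).const_mul h
    refine ((hasDerivAt_arctan_tan_div (mul_ne_zero hh0.ne' hC) hcos.ne').comp s
      hinner).congr_deriv ?_
    ring
  refine ⟨hderiv.differentiableAt, hderiv.deriv, ?_⟩
  have hhC1 : (h * C) ^ 2 ≤ 1 := by
    rw [← sq_abs, abs_mul, abs_of_pos hh0]
    exact pow_le_one₀ (by positivity) hC1
  have hD : 0 < 1 - (1 - h ^ 2 * C ^ 2) * cos θ ^ 2 := by
    rw [← mul_pow, one_sub_one_sub_sq_mul_cos_sq_eq]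
    positivity
  rw [hderiv.deriv, one_div h, mul_inv_cancel_left₀ hh0.ne',
    sin_arccos_sqrt_mul_cos_sq (by positivity) (by rwa [← mul_pow])]
  field_simp

theorem stmt18 (h C s₀ : ℝ) (hh0 : 0 < h) (hh1 : h ≤ 1)
    (hC : C ≠ 0) (hC1 : h * |C| ≤ 1) :
    ∀ s : ℝ, s - s₀ ∈ Set.Ioo (-(Real.pi / (2 * h))) (Real.pi / (2 * h)) →
      DifferentiableAt ℝ (fun s => Real.arctan (Real.tan (h * (s - s₀)) / (h * C))) s ∧
      deriv (fun s => Real.arctan (Real.tan (h * (s - s₀)) / (h * C))) s =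
        h ^ 2 * C / (1 - (1 - h ^ 2 * C ^ 2) * Real.cos (h * (s - s₀)) ^ 2) ∧
      1 / h ^ 2 *
          Real.sin (h * (1 / h * Real.arccos
            (Real.sqrt (1 - h ^ 2 * C ^ 2) * Real.cos (h * (s - s₀))))) ^ 2 *
          deriv (fun s => Real.arctan (Real.tan (h * (s - s₀)) / (h * C))) s = C :=
  stmt18_general h C s₀ hh0 hC hC1
end
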